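/- Let M = M_θ ×_λ M_⊥ be a warped product hemi-slant submanifold of an lcK manifold (M̃^{2n}, J, g). Then for all lifted vector fields X, Y, X₁ ∈ L(M_⊥), one has g(h(X,Y), JX₁) = g(h(X,X₁), JY) − (1/2) g(X,Y) g(B, JX₁) + (1/2) g(X,X₁) g(B, JY), where B is the Lee vector field. -/
import Mathlib


noncomputable section

/-- An abstract algebraic model of a warped product hemi-slant submanifold `M = Mθ ×_λ M⊥` of a locally conformal Kähler manifold `(M̃, J, g)`, i.e. a hemi-slant submanifold locally expressed as a warped product of leaves `Mθ` of `Dθ` and `M⊥` of `D⊥`, warped by `λ : Mθ → (0,∞)`.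

`A` plays the role of the commutative `ℝ`-algebra of smooth real valued functions on the
submanifold `M`, `T` is the `A`-module of tangent vector fields of `M`, and `N` is the
`A`-module of vector fields normal to `M` in the ambient locally conformal Kähler manifold
`(M̃, J, g)`; a vector field of `M̃` along `M` is a pair in `T × N`.  The structure records
the ambient metric `g`, the almost complex structure `J`, directional derivatives `D`, the
ambient Levi-Civita connection `∇̄ = nablaAmb` along `M` (whose tangential and normal parts
give the induced connection, the second fundamental form, the shape operator and the normal
connection via the Gauss and Weingarten formulas), the Lee vector field `B` (with Lee form
`ω = g(B, ·)`, which is closed), the fundamental lcK identity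
`∇̄_U (JV) = J ∇̄_U V + (1/2)(Θ(V) U − ω(V) JU − g(U,V) A + Ω(U,V) B)` (where `Θ = ω ∘ J`,
`A = −J B`, `Ω = g(J·,·)`), and the hemi-slant data: the orthogonal complementary
distributions `D⊥` (totally real) and `Dθ` (slant with slant angle `θ ≠ 0, π/2`). -/
structure WarpedProductHemiSlant (A : Type*) [CommRing A] [Algebra ℝ A]
    (T : Type*) [AddCommGroup T] [Module A T]
    (N : Type*) [AddCommGroup N] [Module A N] where
  /-- the ambient metric evaluated on vector fields along `M` -/
  g : T × N → T × N → A
  g_symm : ∀ u v, g u v = g v u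
  g_add_left : ∀ u v w, g (u + v) w = g u w + g v w
  g_smul_left : ∀ (a : A) (u v : T × N), g (a • u) v = a * g u v
  /-- tangential and normal fields are orthogonal -/
  g_tangent_normal : ∀ (X : T) (ξ : N), g (X, 0) (0, ξ) = 0
  /-- the ambient almost complex structure along `M` -/
  J : T × N →ₗ[A] T × N
  J_sq : ∀ u, J (J u) = -u
  J_isometry : ∀ u v, g (J u) (J v) = g u v
  /-- directional derivative of functions on `M` along tangent fields -/
  D : T → A → A
  D_add_vec : ∀ X Y a, D (X + Y) a = D X a + D Y a
  D_smul_vec : ∀ (b : A) (X : T) (a : A), D (b • X) a = b * D X a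
  D_add : ∀ X a b, D X (a + b) = D X a + D X b
  D_mul : ∀ X a b, D X (a * b) = a * D X b + b * D X a
  D_const : ∀ (X : T) (r : ℝ), D X (algebraMap ℝ A r) = 0
  /-- the ambient Levi-Civita connection `∇̄` along `M` -/
  nablaAmb : T → T × N → T × N
  nablaAmb_add_vec : ∀ X Y u, nablaAmb (X + Y) u = nablaAmb X u + nablaAmb Y u
  nablaAmb_smul_vec : ∀ (a : A) (X : T) u, nablaAmb (a • X) u = a • nablaAmb X u
  nablaAmb_add : ∀ X u v, nablaAmb X (u + v) = nablaAmb X u + nablaAmb X v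
  nablaAmb_smul : ∀ (X : T) (a : A) u, nablaAmb X (a • u) = D X a • u + a • nablaAmb X u
  /-- `∇̄` is a metric connection -/
  nablaAmb_metric : ∀ X u v, D X (g u v) = g (nablaAmb X u) v + g u (nablaAmb X v)
  /-- the Lie bracket of tangent vector fields of `M` -/
  bracket : T → T → T
  /-- `∇̄` is torsion free (tangential part) -/
  torsion_free : ∀ X Y : T,
    (nablaAmb X (Y, (0 : N))).1 - (nablaAmb Y (X, (0 : N))).1 = bracket X Y
  /-- the second fundamental form (normal part of `∇̄` on tangent fields) is symmetric -/
  h_symm : ∀ X Y : T, (nablaAmb X (Y, (0 : N))).2 = (nablaAmb Y (X, (0 : N))).2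
  /-- the Lee vector field of the lcK structure, along `M` -/
  B : T × N
  /-- the Lee form `ω = g(B, ·)` is closed -/
  lee_closed : ∀ X Y : T,
    D X (g B (Y, (0 : N))) - D Y (g B (X, (0 : N))) = g B (bracket X Y, (0 : N))
  /-- the fundamental identity of a locally conformal Kähler manifold -/
  lck_identity : ∀ (X : T) (v : T × N),
    nablaAmb X (J v) = J (nablaAmb X v)
      + algebraMap ℝ A (1 / 2) •
          (g B (J v) • ((X, 0) : T × N) - g B v • J (X, 0)
            + g ((X, 0) : T × N) v • J B + g (J ((X, 0) : T × N)) v • B)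
  /-- the totally real distribution `D⊥` -/
  Dperp : Submodule A T
  /-- the slant distribution `Dθ` -/
  Dtheta : Submodule A T
  orthogonal : ∀ X ∈ Dperp, ∀ Z ∈ Dtheta, g (X, (0 : N)) (Z, (0 : N)) = 0
  complementary : IsCompl Dperp Dtheta
  /-- `D⊥` is totally real: `J D⊥ ⊆ T⊥M` -/
  totally_real : ∀ X ∈ Dperp, (J (X, (0 : N))).1 = 0
  /-- the slant angle `θ`, with `θ ≠ 0, π/2` -/
  θ : ℝ
  theta_pos : 0 < θ
  theta_lt_half_pi : θ < Real.pi / 2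
  /-- `Dθ` is slant with slant angle `θ`: `P² Z = −cos² θ • Z` -/
  slant : ∀ Z ∈ Dtheta,
    (J ((J (Z, (0 : N))).1, (0 : N))).1 = (-(algebraMap ℝ A (Real.cos θ ^ 2))) • Z
  P_mem_Dtheta : ∀ Z ∈ Dtheta, (J (Z, (0 : N))).1 ∈ Dtheta
  /-- the orthogonal projection of `TM` onto `D⊥` -/
  projPerp : T →ₗ[A] T
  projPerp_mem : ∀ X, projPerp X ∈ Dperp
  projPerp_id : ∀ X ∈ Dperp, projPerp X = X
  projPerp_zero : ∀ Z ∈ Dtheta, projPerp Z = 0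
  /-- the orthogonal projection of `TM` onto `Dθ` -/
  projTheta : T →ₗ[A] T
  projTheta_mem : ∀ X, projTheta X ∈ Dtheta
  projTheta_id : ∀ Z ∈ Dtheta, projTheta Z = Z
  projTheta_zero : ∀ X ∈ Dperp, projTheta X = 0
  /-- the set of lifts to `M = Mθ ×_λ M⊥` of vector fields on the second factor `M⊥` -/
  Lperp : Set T
  /-- the set of lifts to `M = Mθ ×_λ M⊥` of vector fields on the first factor `Mθ` -/
  Ltheta : Set T
  Lperp_sub : ∀ X ∈ Lperp, X ∈ Dperp
  Ltheta_sub : ∀ Z ∈ Ltheta, Z ∈ Dtheta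
  Lperp_span : Submodule.span A Lperp = Dperp
  Ltheta_span : Submodule.span A Ltheta = Dtheta
  /-- `ln λ`, where `λ : Mθ → (0,∞)` is the warping function -/
  lnlam : A
  /-- `λ` is (the lift of) a function on the first factor `Mθ` -/
  lnlam_base : ∀ X ∈ Lperp, D X lnlam = 0
  /-- the (lift of the) gradient vector field `grad (ln λ)` -/
  gradlnlam : T
  gradlnlam_spec : ∀ X : T, g (gradlnlam, (0 : N)) (X, (0 : N)) = D X lnlam
  /-- the warped product identity `∇_X Z = ∇_Z X = Z(ln λ) X` -/
  warp_mixed : ∀ X ∈ Lperp, ∀ Z ∈ Ltheta,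
    (nablaAmb X (Z, (0 : N))).1 = D Z lnlam • X ∧
      (nablaAmb Z (X, (0 : N))).1 = D Z lnlam • X
  /-- the leaves of `Dθ` are totally geodesic in `M` -/
  warp_theta_geodesic : ∀ Z ∈ Ltheta, ∀ W ∈ Ltheta, (nablaAmb Z (W, (0 : N))).1 ∈ Dtheta
  /-- the leaves of `D⊥` are totally umbilic in `M` with mean curvature `−grad (ln λ)` -/
  warp_perp_umbilic : ∀ X ∈ Lperp, ∀ Y ∈ Lperp,
    (nablaAmb X (Y, (0 : N))).1 + g (X, (0 : N)) (Y, (0 : N)) • gradlnlam ∈ Dperp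

namespace WarpedProductHemiSlant

variable {A : Type*} [CommRing A] [Algebra ℝ A]
  {T : Type*} [AddCommGroup T] [Module A T]
  {N : Type*} [AddCommGroup N] [Module A N]

/-- The induced Levi-Civita connection `∇` of `M` (tangential part of the Gauss formula). -/
def nabla (S : WarpedProductHemiSlant A T N) (X Y : T) : T := (S.nablaAmb X (Y, 0)).1

/-- The second fundamental form `h` of `M` in `M̃` (normal part of the Gauss formula). -/
def h (S : WarpedProductHemiSlant A T N) (X Y : T) : N := (S.nablaAmb X (Y, 0)).2

/-- The shape operator `𝔄_ξ` of `M` in `M̃` (Weingarten formula). -/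
def shape (S : WarpedProductHemiSlant A T N) (ξ : N) (X : T) : T := -(S.nablaAmb X (0, ξ)).1

/-- The normal connection `∇⊥` of `M` in `M̃` (Weingarten formula). -/
def nablaPerp (S : WarpedProductHemiSlant A T N) (X : T) (ξ : N) : N := (S.nablaAmb X (0, ξ)).2

/-- The tangential part `P` of `J` on tangent vector fields. -/
def P (S : WarpedProductHemiSlant A T N) (X : T) : T := (S.J (X, 0)).1

/-- The normal part `F` of `J` on tangent vector fields. -/
def F (S : WarpedProductHemiSlant A T N) (X : T) : N := (S.J (X, 0)).2

variable (S : WarpedProductHemiSlant A T N)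

lemma g_zero_left (v : T × N) : S.g 0 v = 0 := by
  have h := S.g_add_left 0 0 v
  rw [add_zero] at h
  have h2 : S.g 0 v + S.g 0 v = S.g 0 v + 0 := by rw [add_zero]; exact h.symm
  exact add_left_cancel h2

lemma g_zero_right (u : T × N) : S.g u 0 = 0 := by
  rw [S.g_symm]; exact S.g_zero_left u

lemma g_add_right (u v w : T × N) : S.g u (v + w) = S.g u v + S.g u w := by
  rw [S.g_symm, S.g_add_left, S.g_symm v u, S.g_symm w u]

lemma g_smul_right (a : A) (u v : T × N) : S.g u (a • v) = a * S.g u v := by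
  rw [S.g_symm, S.g_smul_left, S.g_symm]

lemma g_neg_right (u v : T × N) : S.g u (-v) = - S.g u v := by
  have h : S.g u (v + (-v)) = S.g u v + S.g u (-v) := S.g_add_right u v (-v)
  rw [add_neg_cancel, S.g_zero_right] at h
  exact (neg_eq_of_add_eq_zero_right h.symm).symm

lemma g_sub_right (u v w : T × N) : S.g u (v - w) = S.g u v - S.g u w := by
  rw [sub_eq_add_neg, S.g_add_right, S.g_neg_right, sub_eq_add_neg]

lemma D_zero (X : T) : S.D X 0 = 0 := by
  have h := S.D_add X 0 0
  rw [add_zero] at h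
  have h2 : S.D X 0 + S.D X 0 = S.D X 0 + 0 := by rw [add_zero]; exact h.symm
  exact add_left_cancel h2

lemma g_pair_normal (t : T) (n ξ : N) : S.g (t, n) (0, ξ) = S.g (0, n) (0, ξ) := by
  have h : ((t, n) : T × N) = (t, 0) + (0, n) := by simp
  rw [h, S.g_add_left, S.g_tangent_normal t ξ, zero_add]

lemma g_normal_tangent (n : N) (t : T) : S.g ((0 : T), n) (t, (0 : N)) = 0 := by
  rw [S.g_symm]; exact S.g_tangent_normal t n

lemma g_J_skew (u v : T × N) : S.g u (S.J v) = - S.g (S.J u) v := by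
  have h1 := S.J_isometry u (S.J v)
  rw [S.J_sq, S.g_neg_right] at h1
  exact h1.symm

end WarpedProductHemiSlant

/-- Let `M = Mθ ×_λ M⊥` be a warped product hemi-slant submanifold of an lcK manifold. Then for all `X, Y, X₁ ∈ L(M⊥)`, `g(h(X,Y), JX₁) = g(h(X,X₁), JY) − (1/2) g(X,Y) g(B, JX₁) + (1/2) g(X,X₁) g(B, JY)`. -/
theorem WarpedProductHemiSlant.g_h_perp_perp_J {A : Type*} [CommRing A] [Algebra ℝ A]
    {T : Type*} [AddCommGroup T] [Module A T]
    {N : Type*} [AddCommGroup N] [Module A N]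
    (S : WarpedProductHemiSlant A T N) {X Y X₁ : T}
    (hX : X ∈ S.Lperp) (hY : Y ∈ S.Lperp) (hX₁ : X₁ ∈ S.Lperp) :
    S.g (0, S.h X Y) (S.J (X₁, 0))
      = S.g (0, S.h X X₁) (S.J (Y, 0))
        - algebraMap ℝ A (1 / 2) * S.g (X, 0) (Y, 0) * S.g S.B (S.J (X₁, 0))
        + algebraMap ℝ A (1 / 2) * S.g (X, 0) (X₁, 0) * S.g S.B (S.J (Y, 0)) := by
  have hXp := S.Lperp_sub X hX
  have hYp := S.Lperp_sub Y hY
  have hX₁p := S.Lperp_sub X₁ hX₁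
  have hJX₁ : S.J (X₁, (0:N)) = (0, (S.J (X₁, (0:N))).2) :=
    Prod.ext (S.totally_real X₁ hX₁p) rfl
  have hJY : S.J (Y, (0:N)) = (0, (S.J (Y, (0:N))).2) :=
    Prod.ext (S.totally_real Y hYp) rfl
  have hJX : S.J (X, (0:N)) = (0, (S.J (X, (0:N))).2) :=
    Prod.ext (S.totally_real X hXp) rfl
  have stepA : S.g (S.nablaAmb X (Y, 0)) (S.J (X₁, 0))
      = S.g ((0 : T), S.h X Y) (S.J (X₁, 0)) := by
    rw [hJX₁]
    have e : S.nablaAmb X ((Y, 0) : T × N) = ((S.nablaAmb X (Y, 0)).1, S.h X Y) := rfl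
    rw [e, S.g_pair_normal]
  have hzero : S.g ((Y, (0:N)) : T × N) (S.J (X₁, 0)) = 0 := by
    rw [hJX₁]; exact S.g_tangent_normal Y _
  have metric := S.nablaAmb_metric X ((Y, 0) : T × N) (S.J (X₁, 0))
  rw [hzero, S.D_zero] at metric
  have key : S.g ((0:T), S.h X Y) (S.J (X₁, 0))
      = - S.g ((Y, (0:N)) : T × N) (S.nablaAmb X (S.J (X₁, 0))) := by
    rw [← stepA]
    exact eq_neg_of_add_eq_zero_left metric.symm
  have lck := S.lck_identity X ((X₁, 0) : T × N)
  have t0 : S.g ((Y, (0:N)) : T × N) (S.J (S.nablaAmb X (X₁, 0)))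
      = - S.g ((0:T), S.h X X₁) (S.J (Y, 0)) := by
    rw [S.g_J_skew, hJY]
    have e : S.nablaAmb X ((X₁, 0) : T × N) = ((S.nablaAmb X (X₁, 0)).1, S.h X X₁) := rfl
    rw [e, S.g_symm ((0:T), (S.J (Y, (0:N))).2) _, S.g_pair_normal, S.g_symm]
  have t2 : S.g ((Y, (0:N)) : T × N) (S.J (X, 0)) = 0 := by
    rw [hJX]; exact S.g_tangent_normal Y _
  have t3 : S.g ((Y, (0:N)) : T × N) (S.J S.B) = - S.g S.B (S.J (Y, 0)) := by
    rw [S.g_J_skew, S.g_symm]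
  have t4 : S.g (S.J ((X, (0:N)) : T × N)) (X₁, 0) = 0 := by
    rw [hJX]; exact S.g_normal_tangent _ _
  have expand : S.g ((Y, (0:N)) : T × N) (S.nablaAmb X (S.J (X₁, 0)))
      = - S.g ((0:T), S.h X X₁) (S.J (Y, 0))
        + algebraMap ℝ A (1/2) *
          (S.g S.B (S.J (X₁, 0)) * S.g ((X, (0:N)) : T × N) (Y, 0)
            - S.g ((X, (0:N)) : T × N) (X₁, 0) * S.g S.B (S.J (Y, 0))) := by
    rw [lck, S.g_add_right, S.g_smul_right, S.g_add_right, S.g_add_right, S.g_sub_right,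
      S.g_smul_right, S.g_smul_right, S.g_smul_right, S.g_smul_right,
      t0, t2, t3, t4, S.g_symm ((Y, (0:N)) : T × N) ((X, (0:N)) : T × N)]
    ring
  rw [key, expand, S.g_symm ((X, (0:N)) : T × N) ((Y, (0:N)) : T × N)]
  ring
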